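/- Let (C, ▷, ‡) be a model of guarded recursive terms where C is cartesian closed. Then the operator †_{X,Y} : C(▷X × Y, X) → C(Y,X) defined by f† = uncurry([curry(f ∘ ⟨(▷ev) ∘ i ∘ (p_Y × ▷(X^Y)), π_ℓ⟩)]^‡) (currying through the exponential X^Y and using the unguarded unique fixpoint ‡ at the object X^Y) satisfies the parametrized guarded fixpoint identity: f† = f ∘ (p_X × id_Y) ∘ ⟨f†, id_Y⟩ for every f : ▷X × Y → X. -/

import Mathlib

open CategoryTheory CategoryTheory.Limits CategoryTheory.MonoidalCategory
open CategoryTheory.CartesianMonoidalCategory CategoryTheory.CartesianClosed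

/-!
Write `t := (curry k)‡ : 1 → X^Y`, so that `f† = ev ∘ ⟨id, t⟩`. Unfolding the fixpoint once,
`t = curry k ∘ p ∘ t`, gives `f† = k ∘ ⟨id, p ∘ t⟩`. The only remaining point is that the delayed
evaluation inside `k` computes `p ∘ f†`: by naturality of `p` its components commute with the
comparison `▷(A × B) → ▷A × ▷B`, so `▷ev ∘ i ∘ (p × p) = ▷ev ∘ p = p ∘ ev`.
-/

namespace CategoryTheory.NatTrans

variable {C : Type*} [Category C] [CartesianMonoidalCategory C] {F : C ⥤ C} (p : 𝟭 C ⟶ F)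

theorem app_tensor_comp_prodComparison (A B : C) :
    p.app (A ⊗ B) ≫ CartesianMonoidalCategory.prodComparison F A B = p.app A ⊗ₘ p.app B := by
  ext
  · simpa using (p.naturality (fst A B)).symm
  · simpa using (p.naturality (snd A B)).symm

theorem lift_comp_inv_prodComparison {Z A B : C}
    [IsIso (CartesianMonoidalCategory.prodComparison F A B)] (a : Z ⟶ A) (b : Z ⟶ B) :
    lift (a ≫ p.app A) (b ≫ p.app B) ≫ inv (CartesianMonoidalCategory.prodComparison F A B) =
      lift a b ≫ p.app (A ⊗ B) := by
  rw [IsIso.comp_inv_eq, Category.assoc, app_tensor_comp_prodComparison, lift_map]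

end CategoryTheory.NatTrans

theorem CategoryTheory.MonoidalClosed.lift_toUnit_curry_comp_ev {C : Type*} [Category C]
    [CartesianMonoidalCategory C] [MonoidalClosed C] {W X Y : C} (s : 𝟙_ C ⟶ W)
    (k : Y ⊗ W ⟶ X) :
    lift (𝟙 Y) (toUnit Y ≫ s ≫ curry k) ≫ (ihom.ev Y).app X = lift (𝟙 Y) (toUnit Y ≫ s) ≫ k := by
  conv_rhs => rw [← uncurry_curry k, uncurry_eq]
  rw [← Category.assoc (lift _ _), lift_whiskerLeft, Category.assoc]

theorem stmt19 {C : Type*} [Category C] [CartesianMonoidalCategory C]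
    [MonoidalClosed C]
    (F : C ⥤ C) [PreservesFiniteLimits F] (p : 𝟭 C ⟶ F)
    (dag : ∀ {Z : C}, (F.obj Z ⟶ Z) → (𝟙_ C ⟶ Z))
    (hfix : ∀ {Z : C} (g : F.obj Z ⟶ Z), dag g = dag g ≫ p.app Z ≫ g) :
    ∀ {X Y : C} (f : F.obj X ⊗ Y ⟶ X),
      let E := Y ⟹ X
      let inner : Y ⊗ F.obj E ⟶ F.obj X :=
        (p.app Y ⊗ₘ 𝟙 (F.obj E)) ≫ inv (prodComparison F Y E) ≫ F.map ((ihom.ev Y).app X)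
      let fdag : Y ⟶ X :=
        lift (𝟙 Y) (toUnit Y ≫ dag (MonoidalClosed.curry (lift inner (fst Y (F.obj E)) ≫ f))) ≫
          (ihom.ev Y).app X
      fdag = lift fdag (𝟙 Y) ≫ (p.app X ⊗ₘ 𝟙 Y) ≫ f := by
  intro X Y f E inner fdag
  set k := lift inner (fst Y (F.obj E)) ≫ f
  set t := dag (MonoidalClosed.curry k)
  have unfold : fdag = lift (𝟙 Y) (toUnit Y ≫ t ≫ p.app E) ≫ k := by
    rw [← MonoidalClosed.lift_toUnit_curry_comp_ev, Category.assoc, ← hfix]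
  have delay : lift (𝟙 Y) (toUnit Y ≫ t ≫ p.app E) ≫ inner = fdag ≫ p.app X := by
    calc _ = lift (𝟙 Y ≫ p.app Y) ((toUnit Y ≫ t) ≫ p.app E) ≫
          inv (prodComparison F Y E) ≫ F.map ((ihom.ev Y).app X) := by
          simp only [inner, ← Category.assoc, lift_map, Category.id_comp, Category.comp_id]
      _ = fdag ≫ p.app X := by
          rw [← Category.assoc, NatTrans.lift_comp_inv_prodComparison, Category.assoc,
            ← p.naturality, Category.assoc]
          rfl
  have hlift : lift (𝟙 Y) (toUnit Y ≫ t ≫ p.app E) ≫ lift inner (fst Y (F.obj E)) =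
      lift fdag (𝟙 Y) ≫ (p.app X ⊗ₘ 𝟙 Y) := by
    ext <;> simp [delay]
  conv_lhs => rw [unfold, ← Category.assoc, hlift, Category.assoc]
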